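/- The matrix B is invertible over ℚ with (B^{-1})_{ij} = min(i,j), and the matrix B(q) is invertible over ℂ(q) with inverse B̃(q) the symmetric n×n matrix whose entries for j ≤ i are: B̃(q)_{ij} = [j]_q/([n]_q − [n−1]_q) if i = n, and B̃(q)_{ij} = [j]_q·([n−i]_q − [n−i−1]_q)/([n]_q − [n−1]_q) if j ≤ i < n. -/

import Mathlib

/-!
Both inverses are discrete Green's functions. If `u` and `w` solve the recurrence
`x (t + 1) + x (t - 1) = a * x t`, their Casoratian `u (t + 1) * w t - u t * w (t + 1)` is
constant, and `G t j = u (min t j) * w (max t j)` satisfies `a G - G(· + 1) - G(· - 1) = W δ`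
with `W` that constant. Requiring `u (-1) = 0`, and `w n = (a - c₁) * w (n - 1)` for the last
diagonal entry `c₁`, makes the first and last rows of `B` behave like the interior ones, so
`B G = W • 1`. Over `ℚ` take `u t = t + 1`, `w = 1` (so `W = 1`); over `ℂ(q)` take
`u t = [t + 1]_q` and `w t = [n - t - 1]_q - [n - t - 2]_q`, with `W = [n]_q - [n - 1]_q`.
Finally, a one-sided inverse of a square matrix over a field is two-sided.
-/

noncomputable section

/-- The field `ℂ(q)`. -/
abbrev Kq : Type := RatFunc ℂ

/-- The indeterminate `q`. -/
def qv : Kq := RatFunc.X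

/-- The q-number `[m]_q = (q^m − q^{-m})/(q − q^{-1})`. -/
def qnum (m : ℤ) : Kq := (qv ^ m - qv ^ (-m)) / (qv - qv⁻¹)

/-- The symmetrized Cartan matrix entries `B_{ij} = (α_i,α_j)` of type `B_n` (0-based
indices): `B_{ii} = 2` for `i < n`, `B_{nn} = 1`, `B_{i,i+1} = B_{i+1,i} = −1`, else `0`. -/
def symB (n : ℕ) (i j : Fin n) : ℤ :=
  if i = j then (if (i : ℕ) + 1 = n then 1 else 2)
  else if (i : ℕ) + 1 = (j : ℕ) ∨ (j : ℕ) + 1 = (i : ℕ) then -1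
  else 0

/-- The claimed rational inverse: `(B⁻¹)_{ij} = min(i,j)` (1-based). -/
def BinvB (n : ℕ) (i j : Fin n) : ℚ :=
  (min (i : ℕ) (j : ℕ) : ℚ) + 1

/-- The claimed inverse `B̃(q)` of `B(q)` in type `B_n` (with `a = min(i,j)`,
`b = max(i,j)` the 1-based indices):
`[a]_q/([n]_q−[n−1]_q)` if `b = n`, and
`[a]_q([n−b]_q−[n−b−1]_q)/([n]_q−[n−1]_q)` if `b < n`. -/
def BtqB (n : ℕ) (i j : Fin n) : Kq :=
  if (max (i : ℕ) (j : ℕ) : ℤ) + 1 = n then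
    qnum ((min (i : ℕ) (j : ℕ) : ℤ) + 1) / (qnum n - qnum ((n : ℤ) - 1))
  else
    qnum ((min (i : ℕ) (j : ℕ) : ℤ) + 1) *
        (qnum ((n : ℤ) - ((max (i : ℕ) (j : ℕ) : ℤ) + 1)) -
          qnum ((n : ℤ) - ((max (i : ℕ) (j : ℕ) : ℤ) + 1) - 1)) /
      (qnum n - qnum ((n : ℤ) - 1))

theorem Fin.sum_ite_intCast_eq {M : Type*} [AddCommMonoid M] {n : ℕ} (a : ℤ) (f : ℤ → M) :
    ∑ k : Fin n, (if (k : ℤ) = a then f k else 0) = if 0 ≤ a ∧ a < n then f a else 0 := by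
  split_ifs with ha
  · lift a to ℕ using ha.1
    rw [Fintype.sum_eq_single ⟨a, by exact_mod_cast ha.2⟩ fun k hk => if_neg ?_]
    · simp
    · exact fun h => hk (Fin.ext (by exact_mod_cast h))
  · exact Finset.sum_eq_zero fun k _ => if_neg (by omega)

section GreenFunction

variable {R : Type*} [CommRing R]

def casoratian (u w : ℤ → R) (t : ℤ) : R := u (t + 1) * w t - u t * w (t + 1)

def green (u w : ℤ → R) (t j : ℤ) : R := u (min t j) * w (max t j)

variable {a : R} {u w : ℤ → R}

theorem casoratian_add_one (hu : ∀ t, u (t + 1) + u (t - 1) = a * u t)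
    (hw : ∀ t, w (t + 1) + w (t - 1) = a * w t) (t : ℤ) :
    casoratian u w (t + 1) = casoratian u w t := by
  have hu' := hu (t + 1)
  have hw' := hw (t + 1)
  rw [add_sub_cancel_right] at hu' hw'
  unfold casoratian
  linear_combination w (t + 1) * hu' - u (t + 1) * hw'

theorem casoratian_eq_casoratian_neg_one (hu : ∀ t, u (t + 1) + u (t - 1) = a * u t)
    (hw : ∀ t, w (t + 1) + w (t - 1) = a * w t) (t : ℤ) :
    casoratian u w t = casoratian u w (-1) := by
  have hper : Function.Periodic (casoratian u w) 1 := casoratian_add_one hu hw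
  simpa using (hper.sub_int_mul_eq (t + 1) (x := t)).symm

theorem green_recurrence (hu : ∀ t, u (t + 1) + u (t - 1) = a * u t)
    (hw : ∀ t, w (t + 1) + w (t - 1) = a * w t) (t j : ℤ) :
    a * green u w t j - green u w (t + 1) j - green u w (t - 1) j =
      if t = j then casoratian u w (-1) else 0 := by
  rcases lt_trichotomy t j with htj | rfl | htj
  · simp only [green, if_neg htj.ne, min_eq_left htj.le, min_eq_left (by omega : t + 1 ≤ j),
      min_eq_left (by omega : t - 1 ≤ j), max_eq_right htj.le,
      max_eq_right (by omega : t + 1 ≤ j), max_eq_right (by omega : t - 1 ≤ j)]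
    linear_combination -w j * hu t
  · rw [if_pos rfl, ← casoratian_eq_casoratian_neg_one hu hw t]
    simp only [green, casoratian, min_self, max_self, min_eq_right (by omega : t ≤ t + 1),
      max_eq_left (by omega : t ≤ t + 1), min_eq_left (by omega : t - 1 ≤ t),
      max_eq_right (by omega : t - 1 ≤ t)]
    linear_combination -w t * hu t
  · simp only [green, if_neg htj.ne', min_eq_right htj.le, min_eq_right (by omega : j ≤ t + 1),
      min_eq_right (by omega : j ≤ t - 1), max_eq_left htj.le,
      max_eq_left (by omega : j ≤ t + 1), max_eq_left (by omega : j ≤ t - 1)]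
    linear_combination -u j * hw t

theorem sum_symB_mul {n : ℕ} {c : ℤ → R} (hc0 : c 0 = 0)
    (hc_neg_one : c (-1) = -1) {g : ℤ → R} (hg_bot : g (-1) = 0)
    (hg_top : g n = (c 2 - c 1) * g (n - 1)) (i : Fin n) :
    ∑ k : Fin n, c (symB n i k) * g k = c 2 * g i - g (i + 1) - g (i - 1) := by
  have hterm : ∀ k : Fin n, c (symB n i k) * g k =
      (if k = i then c (if (i : ℕ) + 1 = n then 1 else 2) * g i else 0) -
        (if (k : ℤ) = i + 1 then g k else 0) - (if (k : ℤ) = i - 1 then g k else 0) := by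
    intro k
    simp only [symB]
    split_ifs <;> subst_vars <;> first | omega | simp_all [Fin.ext_iff]
  have hlast (h : (i : ℕ) + 1 = n) : g (i + 1) = (c 2 - c 1) * g i := by
    rw [show (i : ℤ) + 1 = n by omega, hg_top, show (n : ℤ) - 1 = i by omega]
  have hfirst (h : ¬ 0 ≤ (i : ℤ) - 1) : g (i - 1) = 0 := by
    rw [show (i : ℤ) - 1 = -1 by omega, hg_bot]
  simp only [hterm, Finset.sum_sub_distrib, Fin.sum_ite_intCast_eq, Finset.sum_ite_eq',
    Finset.mem_univ, if_true]
  by_cases hA : (i : ℕ) + 1 = n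
  · rw [if_pos hA, if_neg (by omega)]
    by_cases hC : 0 ≤ (i : ℤ) - 1
    · rw [if_pos ⟨hC, by omega⟩]
      linear_combination hlast hA
    · rw [if_neg (by omega)]
      linear_combination hlast hA + hfirst hC
  · rw [if_neg hA, if_pos (by omega)]
    by_cases hC : 0 ≤ (i : ℤ) - 1
    · rw [if_pos ⟨hC, by omega⟩]
    · rw [if_neg (by omega)]
      linear_combination hfirst hC

theorem symB_mul_green {n : ℕ} {c : ℤ → R} (hc0 : c 0 = 0) (hc_neg_one : c (-1) = -1)
    (hu : ∀ t, u (t + 1) + u (t - 1) = c 2 * u t)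
    (hw : ∀ t, w (t + 1) + w (t - 1) = c 2 * w t) (hu_bot : u (-1) = 0)
    (hw_top : w n = (c 2 - c 1) * w (n - 1)) :
    (Matrix.of fun i j : Fin n => c (symB n i j)) * Matrix.of (fun i j : Fin n => green u w i j) =
      (u 0 * w (-1)) • 1 := by
  ext i j
  have hj := j.isLt
  rw [Matrix.mul_apply]
  simp only [Matrix.of_apply]
  rw [sum_symB_mul hc0 hc_neg_one (g := fun t => green u w t j), green_recurrence hu hw]
  · simp [casoratian, hu_bot, Matrix.one_apply, Fin.ext_iff]
  · simp [green, hu_bot]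
  · simp only [green, min_eq_right (by omega : (j : ℤ) ≤ n),
      max_eq_left (by omega : (j : ℤ) ≤ n), min_eq_right (by omega : (j : ℤ) ≤ n - 1),
      max_eq_left (by omega : (j : ℤ) ≤ n - 1), hw_top]
    ring

end GreenFunction

theorem symB_mul_BinvB (n : ℕ) :
    (Matrix.of fun i j : Fin n => (symB n i j : ℚ)) * Matrix.of (BinvB n) = 1 := by
  have hBinv : Matrix.of (BinvB n) =
      Matrix.of fun i j : Fin n => green (fun t : ℤ => (t : ℚ) + 1) 1 i j := by
    ext i j
    simp [BinvB, green]
  rw [hBinv, symB_mul_green (c := Int.cast) (by simp) (by simp)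
    (fun t => by push_cast; ring) (fun t => by norm_num) (by simp) (by norm_num)]
  simp

theorem qv_ne_zero : qv ≠ 0 := RatFunc.X_ne_zero

theorem aeval_qv_ne_zero {p : Polynomial ℂ} (hp : p.eval 0 ≠ 0) : Polynomial.aeval qv p ≠ 0 :=
  fun h => RatFunc.transcendental_X ⟨p, fun hp0 => hp (by simp [hp0]), h⟩

theorem qv_sub_inv_ne_zero : qv - qv⁻¹ ≠ 0 := by
  have hq := qv_ne_zero
  have h : qv - qv⁻¹ = Polynomial.aeval qv (Polynomial.X ^ 2 - 1 : Polynomial ℂ) / qv := by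
    simp only [map_sub, map_pow, Polynomial.aeval_X, map_one]
    field_simp
  rw [h]
  exact div_ne_zero (aeval_qv_ne_zero (by simp)) hq

theorem qnum_zero : qnum 0 = 0 := by simp [qnum]

theorem qnum_one : qnum 1 = 1 := by
  simpa [qnum] using div_self qv_sub_inv_ne_zero

theorem qnum_neg (m : ℤ) : qnum (-m) = -qnum m := by
  rw [qnum, qnum, neg_neg, ← neg_div, neg_sub]

theorem qnum_mul_qv_sub_inv (m : ℤ) : qnum m * (qv - qv⁻¹) = qv ^ m - qv ^ (-m) :=
  div_mul_cancel₀ _ qv_sub_inv_ne_zero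

theorem qnum_two : qnum 2 = qv + qv⁻¹ := by
  have hq := qv_ne_zero
  rw [qnum, eq_comm, eq_div_iff qv_sub_inv_ne_zero]
  field_simp
  ring

theorem qnum_add_one_add_qnum_sub_one (m : ℤ) :
    qnum (m + 1) + qnum (m - 1) = qnum 2 * qnum m := by
  have hq := qv_ne_zero
  rw [qnum_two, qnum, qnum, qnum, ← add_div, mul_div_assoc']
  congr 1
  simp only [neg_add, neg_sub, zpow_add₀ hq, zpow_sub₀ hq, zpow_neg, zpow_one]
  ring

theorem qnum_sub_qnum_sub_one_ne_zero (n : ℕ) : qnum n - qnum (n - 1) ≠ 0 := by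
  have hq := qv_ne_zero
  cases n with
  | zero => simp [qnum_zero, qnum_neg, qnum_one]
  | succ m =>
    have key : (qnum (m + 1) - qnum m) * ((qv - qv⁻¹) * qv ^ (m + 1)) =
        Polynomial.aeval qv (Polynomial.X ^ (2 * m + 2) - Polynomial.X ^ (2 * m + 1) +
          Polynomial.X - 1 : Polynomial ℂ) := by
      rw [← mul_assoc, sub_mul, qnum_mul_qv_sub_inv, qnum_mul_qv_sub_inv]
      simp only [zpow_neg, zpow_add_one₀ hq, zpow_natCast, map_sub, map_add, map_pow,
        Polynomial.aeval_X, map_one]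
      field_simp
      ring
    push_cast
    rw [add_sub_cancel_right]
    refine left_ne_zero_of_mul (b := (qv - qv⁻¹) * qv ^ (m + 1)) ?_
    rw [key]
    exact aeval_qv_ne_zero (by simp)

theorem qnum_symB_mul_BtqB (n : ℕ) :
    (Matrix.of fun i j : Fin n => qnum (symB n i j)) * Matrix.of (BtqB n) = 1 := by
  set u : ℤ → Kq := fun t => qnum (t + 1)
  set w : ℤ → Kq := fun t => qnum (n - (t + 1)) - qnum (n - (t + 1) - 1)
  have hu : ∀ t, u (t + 1) + u (t - 1) = qnum 2 * u t := fun t => by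
    simpa [u] using qnum_add_one_add_qnum_sub_one (t + 1)
  have hw : ∀ t, w (t + 1) + w (t - 1) = qnum 2 * w t := fun t => by
    have h₁ := qnum_add_one_add_qnum_sub_one (n - (t + 1))
    have h₂ := qnum_add_one_add_qnum_sub_one (n - (t + 1) - 1)
    simp only [w]
    ring_nf at h₁ h₂ ⊢
    linear_combination h₁ - h₂
  have hBtq : Matrix.of (BtqB n) =
      (u 0 * w (-1))⁻¹ • Matrix.of fun i j : Fin n => green u w i j := by
    ext i j
    simp only [BtqB, green, u, w, Matrix.smul_apply, Matrix.of_apply, smul_eq_mul]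
    rw [zero_add, neg_add_cancel, sub_zero, qnum_one, one_mul]
    split_ifs with hmax
    · rw [hmax, sub_self, zero_sub, qnum_zero, qnum_neg, qnum_one]
      ring
    · ring
  rw [hBtq, Matrix.mul_smul, symB_mul_green qnum_zero (by rw [qnum_neg, qnum_one]) hu hw
    (by simp [u, qnum_zero]) (by simp [w, qnum_zero, qnum_neg, qnum_one]; ring), smul_smul,
    inv_mul_cancel₀, one_smul]
  simpa [u, w, qnum_one] using qnum_sub_qnum_sub_one_ne_zero n

theorem statement14_general (n : ℕ) :
    (Matrix.of fun i j : Fin n => (symB n i j : ℚ)) * Matrix.of (BinvB n) = 1 ∧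
    Matrix.of (BinvB n) * (Matrix.of fun i j : Fin n => (symB n i j : ℚ)) = 1 ∧
    (Matrix.of fun i j : Fin n => qnum (symB n i j)) * Matrix.of (BtqB n) = 1 ∧
    Matrix.of (BtqB n) * (Matrix.of fun i j : Fin n => qnum (symB n i j)) = 1 := by
  have hB := symB_mul_BinvB n
  have hBq := qnum_symB_mul_BtqB n
  exact ⟨hB, mul_eq_one_comm.mp hB, hBq, mul_eq_one_comm.mp hBq⟩

theorem statement14 (n : ℕ) (hn : 1 ≤ n) :
    (Matrix.of fun i j : Fin n => (symB n i j : ℚ)) * Matrix.of (BinvB n) = 1 ∧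
    Matrix.of (BinvB n) * (Matrix.of fun i j : Fin n => (symB n i j : ℚ)) = 1 ∧
    (Matrix.of fun i j : Fin n => qnum (symB n i j)) * Matrix.of (BtqB n) = 1 ∧
    Matrix.of (BtqB n) * (Matrix.of fun i j : Fin n => qnum (symB n i j)) = 1 :=
  statement14_general n

end
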